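/- Let v ∈ 𝒰(ℝ) be a threshold utility for which there exist a ∈ ℝ and an interval J ∈ {(a,∞), (−∞,a)} such that v restricted to J is three times continuously differentiable and the absolute risk aversion R_v^A is strictly monotone on J (either increasing throughout J or decreasing throughout J). Then for every Z ∈ 𝒳 that is not ℙ-a.s. constant there exists a₀ ∈ ℝ such that the base risk measure ρ_{Z+a₀,v} is not v-SD-consistent (hence not a v-Meyer risk measure). -/

import Mathlib

/-!
For `v`-SD the certainty equivalent dominates, `X ≤_{v-SD} CE_v(X)`: every `u ∈ 𝒰_v` lies below
its tangent in the coordinate `v`, `u ≤ u(c) + λ (v - v(c))` with `λ = u'(c)/v'(c)`, since the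
ratio `u'/v'` is antitone exactly when `R_u^A ≥ R_v^A`. Consistency of `ρ_{Z,v}` would then force
`ρ_{Z,v}(CE_v(X)) ≤ ρ_{Z,v}(X)`. When `X + t = Z` the right side is at most `t` and the left side
is at least `CE_v(Z) - CE_v(X)`; so it suffices to find `W` with `CE_v(W + 1) ≠ CE_v(W) + 1`, with
the sign dictated by the monotonicity of `R_v^A`. After shifting `Z` into `J`, the ratio
`v'(x + 1)/v'(x)` is strictly monotone on the range of `W`, and the strict tangent inequality
(for `v(· + 1)` against `v`, or for `v` against `v(· + 1)`) gives that strict comparison for every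
non-constant `W`.
-/

open MeasureTheory Filter Set

noncomputable section

namespace Paper

variable {Ω : Type*} [MeasurableSpace Ω]

/-- The probability measure `P` is atomless. -/
def Atomless (P : Measure Ω) : Prop :=
  ∀ s : Set Ω, MeasurableSet s → 0 < P s →
    ∃ t : Set Ω, MeasurableSet t ∧ t ⊆ s ∧ 0 < P t ∧ P t < P s

/-- `𝒳`: the essentially bounded random variables. -/
def MemX (P : Measure Ω) (X : Ω → ℝ) : Prop :=
  Measurable X ∧ ∃ C : ℝ, ∀ᵐ ω ∂P, |X ω| ≤ C

/-- `𝒰(I)`: twice differentiable functions with everywhere positive first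
derivative on `I`. -/
def IsUtility (I : Set ℝ) (u : ℝ → ℝ) : Prop :=
  (∀ x ∈ I, DifferentiableAt ℝ u x) ∧
  (∀ x ∈ I, DifferentiableAt ℝ (deriv u) x) ∧
  (∀ x ∈ I, 0 < deriv u x)

/-- Arrow–Pratt coefficient of absolute risk aversion. -/
def RA (u : ℝ → ℝ) (x : ℝ) : ℝ := -deriv (deriv u) x / deriv u x

/-- `𝓛¹_v`: `I`-valued random variables `X` with `v(X)` integrable. -/
def MemL1 (P : Measure Ω) (I : Set ℝ) (v : ℝ → ℝ) (X : Ω → ℝ) : Prop :=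
  Measurable X ∧ (∀ᵐ ω ∂P, X ω ∈ I) ∧ Integrable (fun ω => v (X ω)) P

/-- The `v`-SD order: `X ≤_{v-SD} Y`. -/
def vSD (P : Measure Ω) (I : Set ℝ) (v : ℝ → ℝ) (X Y : Ω → ℝ) : Prop :=
  ∀ u : ℝ → ℝ, IsUtility I u → (∀ x ∈ I, RA v x ≤ RA u x) →
    Integrable (fun ω => u (X ω)) P → Integrable (fun ω => u (Y ω)) P →
    ∫ ω, u (X ω) ∂P ≤ ∫ ω, u (Y ω) ∂P

/-- Second-order stochastic dominance. -/
def SSD (P : Measure Ω) (X Y : Ω → ℝ) : Prop :=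
  ∀ u : ℝ → ℝ, IsUtility Set.univ u → ConcaveOn ℝ Set.univ u →
    Integrable (fun ω => u (X ω)) P → Integrable (fun ω => u (Y ω)) P →
    ∫ ω, u (X ω) ∂P ≤ ∫ ω, u (Y ω) ∂P

/-- Monetary risk measure: antitone and cash-additive on `𝒳`. -/
def IsRiskMeasure (P : Measure Ω) (ρ : (Ω → ℝ) → ℝ) : Prop :=
  (∀ X Y : Ω → ℝ, MemX P X → MemX P Y → (∀ᵐ ω ∂P, X ω ≤ Y ω) → ρ Y ≤ ρ X) ∧
  (∀ X : Ω → ℝ, MemX P X → ∀ c : ℝ, ρ (fun ω => X ω + c) = ρ X - c)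

/-- Worst-case risk measure `ρ^w(X) = ess sup (-X)`. -/
def rhoW (P : Measure Ω) (X : Ω → ℝ) : ℝ :=
  sInf {m : ℝ | ∀ᵐ ω ∂P, -X ω ≤ m}

/-- `v`-SD-consistency of `φ` on the domain `D`. -/
def VSDConsistent (P : Measure Ω) (I : Set ℝ) (v : ℝ → ℝ)
    (D : Set (Ω → ℝ)) (φ : (Ω → ℝ) → ℝ) : Prop :=
  ∀ X Y : Ω → ℝ, X ∈ D → Y ∈ D → MemL1 P I v X → MemL1 P I v Y →
    vSD P I v X Y → φ Y ≤ φ X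

/-- `𝒞`: the a.s. strictly positive bounded random variables. -/
def MemC (P : Measure Ω) (X : Ω → ℝ) : Prop :=
  MemX P X ∧ ∀ᵐ ω ∂P, 0 < X ω

/-- `𝓔 = {e^Y : Y ∈ 𝒳}` (up to a.s. equality). -/
def MemE (P : Measure Ω) (X : Ω → ℝ) : Prop :=
  ∃ Y : Ω → ℝ, MemX P Y ∧ ∀ᵐ ω ∂P, X ω = Real.exp (Y ω)

/-- Return risk measure. -/
def IsRRM (P : Measure Ω) (η : (Ω → ℝ) → ℝ) : Prop :=
  (∀ X : Ω → ℝ, MemC P X → 0 < η X) ∧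
  (∀ X Y : Ω → ℝ, MemC P X → MemC P Y → (∀ᵐ ω ∂P, X ω ≤ Y ω) → η Y ≤ η X) ∧
  (∀ X : Ω → ℝ, MemC P X → ∀ t : ℝ, 0 < t → η (fun ω => t * X ω) = t⁻¹ * η X)

/-- Loss-based return risk measure. -/
def IsLossRRM (P : Measure Ω) (κ : (Ω → ℝ) → ℝ) : Prop :=
  (∀ L : Ω → ℝ, MemC P L → 0 < κ L) ∧
  (∀ L L' : Ω → ℝ, MemC P L → MemC P L' → (∀ᵐ ω ∂P, L' ω ≤ L ω) → κ L' ≤ κ L) ∧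
  (∀ L : Ω → ℝ, MemC P L → ∀ t : ℝ, 0 < t → κ (fun ω => t * L ω) = t * κ L)

/-- Base risk measure `ρ_{Z,v}`. -/
def baseRM (P : Measure Ω) (v : ℝ → ℝ) (Z X : Ω → ℝ) : ℝ :=
  sInf {m : ℝ | vSD P Set.univ v Z (fun ω => X ω + m)}

/-- Lower quantile function. -/
def qf (P : Measure Ω) (X : Ω → ℝ) (r : ℝ) : ℝ :=
  sInf {x : ℝ | r ≤ (P {ω | X ω ≤ x}).toReal}

/-- Expected Shortfall at level `p`. -/
def ES (P : Measure Ω) (p : ℝ) (X : Ω → ℝ) : ℝ :=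
  if p < 1 then -(1 / (1 - p)) * ∫ r in (0:ℝ)..(1 - p), qf P X r
  else rhoW P X

lemma IsUtility.differentiable {u : ℝ → ℝ} (hu : IsUtility univ u) : Differentiable ℝ u :=
  fun x => hu.1 x (mem_univ x)

lemma IsUtility.differentiable_deriv {u : ℝ → ℝ} (hu : IsUtility univ u) :
    Differentiable ℝ (deriv u) :=
  fun x => hu.2.1 x (mem_univ x)

lemma IsUtility.deriv_pos {u : ℝ → ℝ} (hu : IsUtility univ u) (x : ℝ) : 0 < deriv u x :=
  hu.2.2 x (mem_univ x)

lemma IsUtility.strictMono {u : ℝ → ℝ} (hu : IsUtility univ u) : StrictMono u :=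
  strictMono_of_deriv_pos hu.deriv_pos

lemma IsUtility.continuous {u : ℝ → ℝ} (hu : IsUtility univ u) : Continuous u :=
  hu.differentiable.continuous

lemma IsUtility.comp_add_const {u : ℝ → ℝ} (hu : IsUtility univ u) (d : ℝ) :
    IsUtility univ (fun x => u (x + d)) := by
  refine ⟨fun x _ => (hu.differentiable (x + d)).comp x (differentiableAt_id.add_const d),
    fun x _ => ?_, fun x _ => ?_⟩
  · rw [funext (deriv_comp_add_const u d)]
    exact (hu.differentiable_deriv (x + d)).comp x (differentiableAt_id.add_const d)
  · rw [deriv_comp_add_const]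
    exact hu.deriv_pos (x + d)

lemma RA_comp_add_const (u : ℝ → ℝ) (d x : ℝ) : RA (fun y => u (y + d)) x = RA u (x + d) := by
  simp_rw [RA, funext (deriv_comp_add_const u d), deriv_comp_add_const]

lemma hasDerivAt_deriv_div_deriv {u v : ℝ → ℝ} (hu : IsUtility univ u) (hv : IsUtility univ v)
    (x : ℝ) :
    HasDerivAt (fun y => deriv u y / deriv v y)
      (deriv u x / deriv v x * (RA v x - RA u x)) x := by
  refine ((hu.differentiable_deriv x).hasDerivAt.div (hv.differentiable_deriv x).hasDerivAt
    (hv.deriv_pos x).ne').congr_deriv ?_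
  have := hu.deriv_pos x
  have := hv.deriv_pos x
  unfold RA
  field_simp
  ring

lemma antitone_deriv_div_deriv {u v : ℝ → ℝ} (hu : IsUtility univ u) (hv : IsUtility univ v)
    (hRA : ∀ x, RA v x ≤ RA u x) : Antitone (fun y => deriv u y / deriv v y) :=
  antitone_of_deriv_nonpos (fun x => (hasDerivAt_deriv_div_deriv hu hv x).differentiableAt)
    fun x => by
      rw [(hasDerivAt_deriv_div_deriv hu hv x).deriv]
      exact mul_nonpos_of_nonneg_of_nonpos (div_pos (hu.deriv_pos x) (hv.deriv_pos x)).le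
        (sub_nonpos.2 (hRA x))

lemma strictAntiOn_deriv_div_deriv {u v : ℝ → ℝ} (hu : IsUtility univ u)
    (hv : IsUtility univ v) {s : Set ℝ} (hs : Convex ℝ s)
    (hRA : ∀ x ∈ interior s, RA v x < RA u x) :
    StrictAntiOn (fun y => deriv u y / deriv v y) s :=
  strictAntiOn_of_deriv_neg hs
    (fun x _ => (hasDerivAt_deriv_div_deriv hu hv x).continuousAt.continuousWithinAt)
    fun x hx => by
      rw [(hasDerivAt_deriv_div_deriv hu hv x).deriv]
      exact mul_neg_of_pos_of_neg (div_pos (hu.deriv_pos x) (hv.deriv_pos x))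
        (sub_neg.2 (hRA x hx))

lemma hasDerivAt_sub_const_mul {u v : ℝ → ℝ} (hu : Differentiable ℝ u) (hv : Differentiable ℝ v)
    (hv' : ∀ x, 0 < deriv v x) (l y : ℝ) :
    HasDerivAt (fun z => u z - l * v z) (deriv v y * (deriv u y / deriv v y - l)) y := by
  refine ((hu y).hasDerivAt.sub ((hv y).hasDerivAt.const_mul l)).congr_deriv ?_
  rw [mul_sub, mul_div_cancel₀ _ (hv' y).ne']
  ring

lemma le_add_mul_sub_of_antitone {u v : ℝ → ℝ} (hu : Differentiable ℝ u) (hv : Differentiable ℝ v)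
    (hv' : ∀ x, 0 < deriv v x)
    (hanti : Antitone (fun y => deriv u y / deriv v y)) (c x : ℝ) :
    u x ≤ u c + deriv u c / deriv v c * (v x - v c) := by
  set l := deriv u c / deriv v c
  have hg := hasDerivAt_sub_const_mul hu hv hv' l
  have hcont : Continuous fun z => u z - l * v z := hu.continuous.sub (hv.continuous.const_mul l)
  suffices u x - l * v x ≤ u c - l * v c by linarith
  rcases le_total x c with hxc | hcx
  · refine monotoneOn_of_deriv_nonneg (convex_Iic c) hcont.continuousOn
      (fun y _ => (hg y).differentiableAt.differentiableWithinAt) (fun y hy => ?_)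
      (mem_Iic.2 hxc) self_mem_Iic hxc
    rw [interior_Iic] at hy
    rw [(hg y).deriv]
    exact mul_nonneg (hv' y).le (sub_nonneg.2 (hanti hy.le))
  · refine antitoneOn_of_deriv_nonpos (convex_Ici c) hcont.continuousOn
      (fun y _ => (hg y).differentiableAt.differentiableWithinAt) (fun y hy => ?_)
      self_mem_Ici (mem_Ici.2 hcx) hcx
    rw [interior_Ici] at hy
    rw [(hg y).deriv]
    exact mul_nonpos_of_nonneg_of_nonpos (hv' y).le (sub_nonpos.2 (hanti hy.le))

lemma lt_add_mul_sub_of_strictAntiOn {u v : ℝ → ℝ} (hu : Differentiable ℝ u)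
    (hv : Differentiable ℝ v) (hv' : ∀ x, 0 < deriv v x) {s : Set ℝ} (hs : Convex ℝ s)
    (hanti : StrictAntiOn (fun y => deriv u y / deriv v y) s) {c x : ℝ} (hc : c ∈ s)
    (hx : x ∈ s) (hxc : x ≠ c) :
    u x < u c + deriv u c / deriv v c * (v x - v c) := by
  set l := deriv u c / deriv v c
  have hg := hasDerivAt_sub_const_mul hu hv hv' l
  have hcont : Continuous fun z => u z - l * v z := hu.continuous.sub (hv.continuous.const_mul l)
  suffices u x - l * v x < u c - l * v c by linarith
  rcases hxc.lt_or_gt with hxc | hcx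
  · refine strictMonoOn_of_deriv_pos (hs.inter (convex_Iic c)) hcont.continuousOn
      (fun y hy => ?_) ⟨hx, hxc.le⟩ ⟨hc, self_mem_Iic⟩ hxc
    rw [interior_inter, interior_Iic] at hy
    rw [(hg y).deriv]
    exact mul_pos (hv' y) (sub_pos.2 (hanti (interior_subset hy.1) hc hy.2))
  · refine strictAntiOn_of_deriv_neg (hs.inter (convex_Ici c)) hcont.continuousOn
      (fun y hy => ?_) ⟨hc, self_mem_Ici⟩ ⟨hx, hcx.le⟩ hcx
    rw [interior_inter, interior_Ici] at hy
    rw [(hg y).deriv]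
    exact mul_neg_of_pos_of_neg (hv' y) (sub_neg.2 (hanti hc (interior_subset hy.1) hy.2))

lemma MemX.exists_ae_mem_Icc {P : Measure Ω} {X : Ω → ℝ} (hX : MemX P X) :
    ∃ C, ∀ᵐ ω ∂P, X ω ∈ Icc (-C) C := by
  obtain ⟨-, C, hC⟩ := hX
  exact ⟨C, hC.mono fun ω hω => abs_le.1 hω⟩

lemma MemX.add_const {P : Measure Ω} {X : Ω → ℝ} (hX : MemX P X) (d : ℝ) :
    MemX P (fun ω => X ω + d) := by
  obtain ⟨hXm, C, hC⟩ := hX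
  refine ⟨hXm.add_const d, C + |d|, hC.mono fun ω hω => ?_⟩
  exact (abs_add_le _ _).trans (by linarith)

lemma memX_const (P : Measure Ω) (c : ℝ) : MemX P (fun _ => c) :=
  ⟨measurable_const, |c|, ae_of_all _ fun _ => le_rfl⟩

lemma integrable_comp_of_ae_mem_Icc {P : Measure Ω} [IsFiniteMeasure P] {f : ℝ → ℝ}
    (hf : Continuous f) {X : Ω → ℝ} (hX : Measurable X) {lo hi : ℝ}
    (hb : ∀ᵐ ω ∂P, X ω ∈ Icc lo hi) : Integrable (fun ω => f (X ω)) P := by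
  obtain ⟨B, hB⟩ := isCompact_Icc.exists_bound_of_continuousOn hf.continuousOn
  exact (integrable_const B).mono' (hf.measurable.comp hX).aestronglyMeasurable
    (hb.mono fun ω hω => by simpa using hB _ hω)

lemma MemX.integrable_comp {P : Measure Ω} [IsFiniteMeasure P] {X : Ω → ℝ} (hX : MemX P X)
    {f : ℝ → ℝ} (hf : Continuous f) : Integrable (fun ω => f (X ω)) P :=
  let ⟨_, hC⟩ := hX.exists_ae_mem_Icc
  integrable_comp_of_ae_mem_Icc hf hX.1 hC

lemma integral_comp_mem_Icc {P : Measure Ω} [IsProbabilityMeasure P] {f : ℝ → ℝ}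
    (hf : Monotone f) {X : Ω → ℝ} (hfX : Integrable (fun ω => f (X ω)) P) {lo hi : ℝ}
    (hb : ∀ᵐ ω ∂P, X ω ∈ Icc lo hi) : ∫ ω, f (X ω) ∂P ∈ Icc (f lo) (f hi) := by
  constructor
  · simpa using integral_mono_ae (integrable_const (f lo)) hfX (hb.mono fun ω hω => hf hω.1)
  · simpa using integral_mono_ae hfX (integrable_const (f hi)) (hb.mono fun ω hω => hf hω.2)

lemma exists_integral_comp_eq {P : Measure Ω} [IsProbabilityMeasure P] {f : ℝ → ℝ}
    (hf : Continuous f) (hf' : Monotone f) {X : Ω → ℝ} (hX : Measurable X) {lo hi : ℝ}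
    (hb : ∀ᵐ ω ∂P, X ω ∈ Icc lo hi) : ∃ c ∈ Icc lo hi, ∫ ω, f (X ω) ∂P = f c := by
  obtain ⟨ω, hω⟩ := hb.exists
  obtain ⟨c, hc, hfc⟩ := intermediate_value_Icc (hω.1.trans hω.2) hf.continuousOn
    (integral_comp_mem_Icc hf' (integrable_comp_of_ae_mem_Icc hf hX hb) hb)
  exact ⟨c, hc, hfc.symm⟩

lemma vSD_const_of_integral_eq {P : Measure Ω} [IsProbabilityMeasure P] {v : ℝ → ℝ}
    (hv : IsUtility univ v) {X : Ω → ℝ} (hvX : Integrable (fun ω => v (X ω)) P) {c : ℝ}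
    (hc : ∫ ω, v (X ω) ∂P = v c) : vSD P univ v X (fun _ => c) := by
  intro u hu hRA huX _
  set l := deriv u c / deriv v c
  have htangent : ∀ ω, u (X ω) ≤ u c + l * (v (X ω) - v c) := fun ω =>
    le_add_mul_sub_of_antitone hu.differentiable hv.differentiable hv.deriv_pos
      (antitone_deriv_div_deriv hu hv fun x => hRA x (mem_univ x)) c (X ω)
  have hint : Integrable (fun ω => l * (v (X ω) - v c)) P :=
    (hvX.sub (integrable_const _)).const_mul l
  calc ∫ ω, u (X ω) ∂P ≤ ∫ ω, (u c + l * (v (X ω) - v c)) ∂P :=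
        integral_mono huX ((integrable_const _).add hint) htangent
    _ = u c := by
        rw [integral_add (integrable_const _) hint, integral_const_mul,
          integral_sub hvX (integrable_const _), hc]
        simp
    _ = ∫ _, u c ∂P := by simp

lemma integral_comp_lt_of_strictAntiOn {P : Measure Ω} [IsProbabilityMeasure P] {u v : ℝ → ℝ}
    (hu : Differentiable ℝ u) (hv : Differentiable ℝ v) (hv' : ∀ x, 0 < deriv v x) {m M : ℝ}
    (hanti : StrictAntiOn (fun y => deriv u y / deriv v y) (Icc m M)) {W : Ω → ℝ}
    (hW : Measurable W) (hb : ∀ᵐ ω ∂P, W ω ∈ Icc m M) (hnc : ¬ ∃ r : ℝ, ∀ᵐ ω ∂P, W ω = r)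
    {c : ℝ} (hc : c ∈ Icc m M) (hvc : ∫ ω, v (W ω) ∂P = v c) :
    ∫ ω, u (W ω) ∂P < u c := by
  set l := deriv u c / deriv v c
  set g : ℝ → ℝ := fun x => u c + l * (v x - v c) - u x
  have hg_pos : ∀ x ∈ Icc m M, x ≠ c → 0 < g x := fun x hx hxc => sub_pos.2 <|
    lt_add_mul_sub_of_strictAntiOn hu hv hv' (convex_Icc m M) hanti hc hx hxc
  have hg_nonneg : ∀ᵐ ω ∂P, 0 ≤ g (W ω) := hb.mono fun ω hω => by
    rcases eq_or_ne (W ω) c with h | h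
    · simp [g, h]
    · exact (hg_pos _ hω h).le
  have hgW : Integrable (fun ω => g (W ω)) P := integrable_comp_of_ae_mem_Icc
    (continuous_const.add (continuous_const.mul (hv.continuous.sub continuous_const))
      |>.sub hu.continuous) hW hb
  have hg_int_pos : 0 < ∫ ω, g (W ω) ∂P := by
    refine (integral_nonneg_of_ae hg_nonneg).lt_of_ne fun h0 => hnc ⟨c, ?_⟩
    filter_upwards [(integral_eq_zero_iff_of_nonneg_ae hg_nonneg hgW).1 h0.symm, hb]
      with ω hgω hω
    by_contra hne
    exact (hg_pos _ hω hne).ne' hgω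
  have huW : Integrable (fun ω => u (W ω)) P :=
    integrable_comp_of_ae_mem_Icc hu.continuous hW hb
  have hvW : Integrable (fun ω => v (W ω)) P :=
    integrable_comp_of_ae_mem_Icc hv.continuous hW hb
  have : ∫ ω, g (W ω) ∂P = u c - ∫ ω, u (W ω) ∂P := by
    simp only [g]
    rw [integral_sub _ huW, integral_add (integrable_const _), integral_const_mul,
      integral_sub hvW (integrable_const _), hvc]
    · simp
    · exact (hvW.sub (integrable_const _)).const_mul l
    · exact (integrable_const _).add ((hvW.sub (integrable_const _)).const_mul l)
  linarith

lemma vSD_of_ae_le {P : Measure Ω} {v : ℝ → ℝ} {X Y : Ω → ℝ} (h : ∀ᵐ ω ∂P, X ω ≤ Y ω) :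
    vSD P univ v X Y := fun _ hu _ huX huY =>
  integral_mono_ae huX huY (h.mono fun _ hω => hu.strictMono.monotone hω)

lemma bddBelow_setOf_vSD {P : Measure Ω} [IsProbabilityMeasure P] {v : ℝ → ℝ}
    (hv : IsUtility univ v) {Z X : Ω → ℝ} (hZ : MemX P Z) (hX : MemX P X) :
    BddBelow {m : ℝ | vSD P univ v Z (fun ω => X ω + m)} := by
  obtain ⟨CZ, hCZ⟩ := hZ.exists_ae_mem_Icc
  obtain ⟨CX, hCX⟩ := hX.exists_ae_mem_Icc
  refine ⟨-CZ - CX, fun m hm => ?_⟩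
  have hXm : ∀ᵐ ω ∂P, X ω + m ∈ Icc (-CX + m) (CX + m) :=
    hCX.mono fun ω hω => ⟨by linarith [hω.1], by linarith [hω.2]⟩
  have hvXm := integrable_comp_of_ae_mem_Icc hv.continuous (hX.1.add_const m) hXm
  have hvZ := hZ.integrable_comp hv.continuous
  have : v (-CZ) ≤ v (CX + m) :=
    calc v (-CZ) ≤ ∫ ω, v (Z ω) ∂P := (integral_comp_mem_Icc hv.strictMono.monotone hvZ hCZ).1
      _ ≤ ∫ ω, v (X ω + m) ∂P := hm v hv (fun _ _ => le_rfl) hvZ hvXm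
      _ ≤ v (CX + m) := (integral_comp_mem_Icc hv.strictMono.monotone hvXm hXm).2
  linarith [hv.strictMono.le_iff_le.1 this]

lemma baseRM_le_of_add_eq {P : Measure Ω} [IsProbabilityMeasure P] {v : ℝ → ℝ}
    (hv : IsUtility univ v) {Z X : Ω → ℝ} (hZ : MemX P Z) (hX : MemX P X) {t : ℝ}
    (hXt : (fun ω => X ω + t) = Z) : baseRM P v Z X ≤ t :=
  csInf_le (bddBelow_setOf_vSD hv hZ hX) (by rw [mem_ofPred_eq, hXt]; exact fun _ _ _ _ _ => le_rfl)

lemma sub_le_baseRM_const {P : Measure Ω} [IsProbabilityMeasure P] {v : ℝ → ℝ}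
    (hv : IsUtility univ v) {Z : Ω → ℝ} (hZ : MemX P Z) {cZ : ℝ}
    (hcZ : ∫ ω, v (Z ω) ∂P = v cZ) (cX : ℝ) : cZ - cX ≤ baseRM P v Z (fun _ => cX) := by
  obtain ⟨C, hC⟩ := hZ.exists_ae_mem_Icc
  refine le_csInf ⟨C - cX, vSD_of_ae_le (hC.mono fun ω hω => by linarith [hω.2])⟩
    fun m hm => ?_
  have := hm v hv (fun _ _ => le_rfl) (hZ.integrable_comp hv.continuous) (integrable_const _)
  simp only [hcZ, integral_const, probReal_univ, one_smul] at this
  linarith [hv.strictMono.le_iff_le.1 this]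

lemma not_vSDConsistent_baseRM_of_lt {P : Measure Ω} [IsProbabilityMeasure P] {v : ℝ → ℝ}
    (hv : IsUtility univ v) {Z X : Ω → ℝ} (hZ : MemX P Z) (hX : MemX P X) {t : ℝ}
    (hXt : (fun ω => X ω + t) = Z) {cX cZ : ℝ} (hcX : ∫ ω, v (X ω) ∂P = v cX)
    (hcZ : ∫ ω, v (Z ω) ∂P = v cZ) (hgap : t < cZ - cX) :
    ¬ VSDConsistent P univ v {X | MemX P X} (baseRM P v Z) := by
  intro hcons
  have hvX := hX.integrable_comp hv.continuous
  have := hcons X (fun _ => cX) hX (memX_const P cX)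
    ⟨hX.1, ae_of_all _ fun _ => mem_univ _, hvX⟩
    ⟨measurable_const, ae_of_all _ fun _ => mem_univ _, integrable_const _⟩
    (vSD_const_of_integral_eq hv hvX hcX)
  linarith [baseRM_le_of_add_eq hv hZ hX hXt, sub_le_baseRM_const hv hZ hcZ cX]

lemma not_vSDConsistent_of_strictMonoOn_RA {P : Measure Ω} [IsProbabilityMeasure P]
    {v : ℝ → ℝ} (hv : IsUtility univ v) {W : Ω → ℝ} (hW : MemX P W) {m M : ℝ}
    (hb : ∀ᵐ ω ∂P, W ω ∈ Icc m M) (hnc : ¬ ∃ r : ℝ, ∀ᵐ ω ∂P, W ω = r)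
    (hRA : StrictMonoOn (RA v) (Icc m (M + 1))) :
    ¬ VSDConsistent P univ v {X | MemX P X} (baseRM P v W) := by
  have hv₁ := hv.comp_add_const 1
  obtain ⟨c, hc, hcW⟩ := exists_integral_comp_eq hv.continuous hv.strictMono.monotone hW.1 hb
  obtain ⟨c₁, -, hc₁W⟩ :=
    exists_integral_comp_eq hv₁.continuous hv₁.strictMono.monotone hW.1 hb
  have hanti := strictAntiOn_deriv_div_deriv hv₁ hv (convex_Icc m M) fun x hx => by
    rw [interior_Icc] at hx
    rw [RA_comp_add_const]
    exact hRA ⟨hx.1.le, by linarith [hx.2]⟩ ⟨by linarith [hx.1], by linarith [hx.2]⟩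
      (lt_add_one x)
  have hlt := integral_comp_lt_of_strictAntiOn hv₁.differentiable hv.differentiable hv.deriv_pos
    hanti hW.1 hb hnc hc hcW
  rw [hc₁W] at hlt
  have : c₁ < c := by linarith [hv.strictMono.lt_iff_lt.1 hlt]
  exact not_vSDConsistent_baseRM_of_lt hv hW (hW.add_const 1) (t := -1) (funext fun ω => by ring)
    hc₁W hcW (by linarith)

lemma not_vSDConsistent_of_strictAntiOn_RA {P : Measure Ω} [IsProbabilityMeasure P]
    {v : ℝ → ℝ} (hv : IsUtility univ v) {W : Ω → ℝ} (hW : MemX P W) {m M : ℝ}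
    (hb : ∀ᵐ ω ∂P, W ω ∈ Icc m M) (hnc : ¬ ∃ r : ℝ, ∀ᵐ ω ∂P, W ω = r)
    (hRA : StrictAntiOn (RA v) (Icc m (M + 1))) :
    ¬ VSDConsistent P univ v {X | MemX P X} (baseRM P v (fun ω => W ω + 1)) := by
  have hv₁ := hv.comp_add_const 1
  obtain ⟨c, -, hcW⟩ := exists_integral_comp_eq hv.continuous hv.strictMono.monotone hW.1 hb
  obtain ⟨c₁, hc₁, hc₁W⟩ :=
    exists_integral_comp_eq hv₁.continuous hv₁.strictMono.monotone hW.1 hb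
  have hanti := strictAntiOn_deriv_div_deriv hv hv₁ (convex_Icc m M) fun x hx => by
    rw [interior_Icc] at hx
    rw [RA_comp_add_const]
    exact hRA ⟨hx.1.le, by linarith [hx.2]⟩ ⟨by linarith [hx.1], by linarith [hx.2]⟩
      (lt_add_one x)
  have hlt := integral_comp_lt_of_strictAntiOn hv.differentiable hv₁.differentiable hv₁.deriv_pos
    hanti hW.1 hb hnc hc₁ hc₁W
  rw [hcW] at hlt
  have : c < c₁ := hv.strictMono.lt_iff_lt.1 hlt
  exact not_vSDConsistent_baseRM_of_lt hv (hW.add_const 1) hW (t := 1) rfl hcW hc₁W (by linarith)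

lemma exists_Icc_subset_of_eq_Ioi_or_Iio {a : ℝ} {J : Set ℝ} (hJ : J = Ioi a ∨ J = Iio a)
    (C : ℝ) : ∃ b, Icc (b - C) (b + C + 1) ⊆ J := by
  rcases hJ with rfl | rfl
  · exact ⟨a + C + 1, fun x hx => by simp only [mem_Ioi]; linarith [hx.1]⟩
  · exact ⟨a - C - 2, fun x hx => by simp only [mem_Iio]; linarith [hx.2]⟩

theorem statement12_general (P : Measure Ω) [IsProbabilityMeasure P]
    (v : ℝ → ℝ) (hv : IsUtility Set.univ v)
    (a : ℝ) (J : Set ℝ) (hJ : J = Set.Ioi a ∨ J = Set.Iio a)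
    (hmono : StrictMonoOn (RA v) J ∨ StrictAntiOn (RA v) J) :
    ∀ Z : Ω → ℝ, MemX P Z → ¬ (∃ r : ℝ, ∀ᵐ ω ∂P, Z ω = r) →
      ∃ a₀ : ℝ, ¬ VSDConsistent P Set.univ v {X | MemX P X}
        (baseRM P v (fun ω => Z ω + a₀)) := by
  intro Z hZ hnc
  obtain ⟨C, hC⟩ := hZ.exists_ae_mem_Icc
  obtain ⟨b, hbJ⟩ := exists_Icc_subset_of_eq_Ioi_or_Iio hJ C
  have hWb : ∀ᵐ ω ∂P, Z ω + b ∈ Icc (b - C) (b + C) :=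
    hC.mono fun ω hω => ⟨by linarith [hω.1], by linarith [hω.2]⟩
  have hWnc : ¬ ∃ r : ℝ, ∀ᵐ ω ∂P, Z ω + b = r := fun ⟨r, hr⟩ =>
    hnc ⟨r - b, hr.mono fun ω hω => by linarith⟩
  rcases hmono with hinc | hdec
  · exact ⟨b, not_vSDConsistent_of_strictMonoOn_RA hv (hZ.add_const b) hWb hWnc (hinc.mono hbJ)⟩
  · refine ⟨b + 1, ?_⟩
    simpa only [add_assoc] using
      not_vSDConsistent_of_strictAntiOn_RA hv (hZ.add_const b) hWb hWnc (hdec.mono hbJ)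

/-- Suppose `v ∈ 𝒰(ℝ)` is three times continuously
differentiable on an interval `J = (a, ∞)` or `J = (-∞, a)` on which `R_v^A` is
strictly increasing or strictly decreasing. Then for every `Z ∈ 𝒳` that is not
a.s. constant there is `a₀ ∈ ℝ` such that the base risk measure `ρ_{Z + a₀, v}`
is not `v`-SD-consistent. -/
theorem statement12 (P : Measure Ω) [IsProbabilityMeasure P] (hP : Atomless P)
    (v : ℝ → ℝ) (hv : IsUtility Set.univ v)
    (a : ℝ) (J : Set ℝ) (hJ : J = Set.Ioi a ∨ J = Set.Iio a)
    (hsmooth : ContDiffOn ℝ 3 v J)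
    (hmono : StrictMonoOn (RA v) J ∨ StrictAntiOn (RA v) J) :
    ∀ Z : Ω → ℝ, MemX P Z → ¬ (∃ r : ℝ, ∀ᵐ ω ∂P, Z ω = r) →
      ∃ a₀ : ℝ, ¬ VSDConsistent P Set.univ v {X | MemX P X}
        (baseRM P v (fun ω => Z ω + a₀)) :=
  statement12_general P v hv a J hJ hmono

end Paper
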